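/- arXiv:2510.06057 — 4 statements merged into one kernel-verified Lean document; each statement's English description precedes it below -/
import Mathlib

section
/- Let m be a positive integer and R = ℤ[1/m]. Then the canonical ring homomorphism R[X]/(X^m − 1) → ∏_{d ∣ m} R[X]/(Φ_d(X)), induced by the factorization X^m − 1 = ∏_{d∣m} Φ_d(X), is an isomorphism of rings. -/
open Polynomial

/-- Let `R = ℤ[1/m]` (i.e. any localization of `ℤ` away from `m`). The canonical ring
homomorphism `R[X]/(X^m − 1) → ∏_{d ∣ m} R[X]/(Φ_d(X))` induced by the factorization
`X^m − 1 = ∏_{d∣m} Φ_d(X)` is an isomorphism. This is expressed by saying that the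
product of the quotient maps `R[X] → R[X]/(Φ_d(X))` over the divisors `d` of `m` is
surjective with kernel the ideal generated by `X^m − 1`. -/
theorem stmt_7 (m : ℕ) (hm : 0 < m) (R : Type*) [CommRing R] [Algebra ℤ R]
    [IsLocalization.Away (m : ℤ) R] :
    Function.Surjective
        (Pi.ringHom fun d : {d : ℕ // d ∈ Nat.divisors m} =>
          Ideal.Quotient.mk (Ideal.span {cyclotomic d.1 R})) ∧
      RingHom.ker
          (Pi.ringHom fun d : {d : ℕ // d ∈ Nat.divisors m} =>
            Ideal.Quotient.mk (Ideal.span {cyclotomic d.1 R})) =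
        Ideal.span {(X : Polynomial R) ^ m - 1} := by
  have hmu : IsUnit ((m : ℕ) : R) := by
    have := IsLocalization.Away.algebraMap_isUnit (S := R) (m : ℤ)
    rwa [show (algebraMap ℤ R) (m : ℤ) = ((m : ℕ) : R) by simp] at this
  have hsep : ((X : Polynomial R) ^ m - 1).Separable := by
    have := Polynomial.separable_X_pow_sub_C_unit (R := R) (n := m) 1 hmu
    simpa using this
  have hprod : ∏ d ∈ Nat.divisors m, cyclotomic d R = (X : Polynomial R) ^ m - 1 :=
    prod_cyclotomic_eq_X_pow_sub_one hm R
  have hcop : ∀ d e : {d : ℕ // d ∈ Nat.divisors m}, d ≠ e →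
      IsCoprime (cyclotomic d.1 R) (cyclotomic e.1 R) := by
    intro d e hde
    have hdvd : cyclotomic d.1 R * cyclotomic e.1 R ∣ (X : Polynomial R) ^ m - 1 := by
      rw [← hprod]
      have : ({d.1, e.1} : Finset ℕ) ⊆ Nat.divisors m := by
        intro x hx
        simp only [Finset.mem_insert, Finset.mem_singleton] at hx
        rcases hx with rfl | rfl
        · exact d.2
        · exact e.2
      have hne : d.1 ≠ e.1 := fun h => hde (Subtype.ext h)
      calc cyclotomic d.1 R * cyclotomic e.1 R
          = ∏ x ∈ ({d.1, e.1} : Finset ℕ), cyclotomic x R := by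
            rw [Finset.prod_insert (by simpa using hne), Finset.prod_singleton]
        _ ∣ ∏ x ∈ Nat.divisors m, cyclotomic x R := Finset.prod_dvd_prod_of_subset _ _ _ this
    exact (hsep.of_dvd hdvd).isCoprime
  have hcopI : Pairwise fun d e : {d : ℕ // d ∈ Nat.divisors m} =>
      IsCoprime (Ideal.span {cyclotomic d.1 R}) (Ideal.span {cyclotomic e.1 R}) := by
    intro d e hde
    exact (Ideal.isCoprime_span_singleton_iff _ _).2 (hcop d e hde)
  constructor
  · intro x
    obtain ⟨r, hr⟩ := Ideal.pi_quotient_surjective hcopI x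
    exact ⟨r, funext fun i => hr i⟩
  · erw [Ideal.ker_Pi_Quotient_mk]
    rw [Ideal.iInf_span_singleton (fun d e hde => hcop d e hde)]
    rw [Finset.prod_coe_sort m.divisors (fun d => cyclotomic d R), hprod]
end

section
/- The p-adic completion of the direct sum ⊕_{n∈ℕ} ℤ is isomorphic, as a topological abelian group, to the group of null sequences in ℤ_p: {(a_n)_{n∈ℕ} ∈ ∏_{n∈ℕ} ℤ_p : a_n → 0 p-adically as n → ∞}, with the isomorphism induced by the coordinatewise inclusion ⊕_ℕ ℤ → ∏_ℕ ℤ_p. -/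
open Filter

/-- The additive group of null sequences in `ℤ_p`: sequences `(a_n)` with `a_n → 0`
`p`-adically. -/
noncomputable def nullSequences (p : ℕ) [Fact p.Prime] : AddSubgroup (ℕ → ℤ_[p]) where
  carrier := {a | Tendsto a atTop (nhds 0)}
  add_mem' := fun ha hb => by
    have h := Filter.Tendsto.add ha hb
    rw [add_zero] at h
    exact h
  zero_mem' := tendsto_const_nhds
  neg_mem' := fun ha => by
    have h := Filter.Tendsto.neg ha
    rw [neg_zero] at h
    exact h

namespace Stmt13Aux

variable (p : ℕ) [Fact p.Prime]

abbrev J : Ideal ℤ := Ideal.span {(p : ℤ)}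

lemma Jpow (k : ℕ) : J p ^ k = Ideal.span {((p ^ k : ℕ) : ℤ)} := by
  rw [Ideal.span_singleton_pow]; norm_cast

/-- The ring morphism from the adic completion of ℤ to `ZMod (p ^ k)`. -/
noncomputable def g (k : ℕ) : AdicCompletion (J p) ℤ →+* ZMod (p ^ k) :=
  (((Ideal.quotEquivOfEq (Jpow p k)).trans
    (Int.quotientSpanNatEquivZMod (p ^ k))) : ℤ ⧸ (J p ^ k) ≃+* ZMod (p ^ k)).toRingHom.comp
    (AdicCompletion.evalₐ (J p) k).toRingHom

lemma gspec (k : ℕ) (x : AdicCompletion (J p) ℤ) (m : ℤ)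
    (h : x.val k = Submodule.Quotient.mk m) : g p k x = (m : ZMod (p ^ k)) := by
  have h1 : AdicCompletion.evalₐ (J p) k x = Ideal.Quotient.mk (J p ^ k) m := by
    simp only [AdicCompletion.evalₐ, AlgHom.coe_comp, Function.comp_apply,
      AlgHom.ofLinearMap_apply, AdicCompletion.eval_apply, h]
    change Ideal.quotientEquivAlgOfEq ℤ _ (x.val k) = _
    rw [h]; rfl
  have h2 : ((((Ideal.quotEquivOfEq (Jpow p k)).trans
      (Int.quotientSpanNatEquivZMod (p ^ k))) : ℤ ⧸ (J p ^ k) ≃+* ZMod (p ^ k)).toRingHom.comp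
      (Ideal.Quotient.mk (J p ^ k))) = Int.castRingHom (ZMod (p ^ k)) := Subsingleton.elim _ _
  calc g p k x = (((Ideal.quotEquivOfEq (Jpow p k)).trans
      (Int.quotientSpanNatEquivZMod (p ^ k))) : ℤ ⧸ (J p ^ k) ≃+* ZMod (p ^ k)).toRingHom
        ((AdicCompletion.evalₐ (J p) k) x) := rfl
    _ = (m : ZMod (p ^ k)) := by rw [h1]; exact RingHom.congr_fun h2 m

lemma gcompat : ∀ (k1 k2 : ℕ) (h : k1 ≤ k2),
    (ZMod.castHom (pow_dvd_pow p h) (ZMod (p ^ k1))).comp (g p k2) = g p k1 := by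
  intro k1 k2 h
  ext x
  obtain ⟨m, hm⟩ := Submodule.Quotient.mk_surjective _ (x.val k2)
  have h1 : x.val k1 = Submodule.Quotient.mk m := by
    rw [← x.property h, ← hm]; rfl
  simp only [RingHom.comp_apply, gspec p k2 x m hm.symm, gspec p k1 x m h1, map_intCast]

/-- The ring morphism from the adic completion of ℤ to `ℤ_[p]`. -/
noncomputable def L : AdicCompletion (J p) ℤ →+* ℤ_[p] :=
  PadicInt.lift (gcompat p)

lemma Lspec (k : ℕ) (x : AdicCompletion (J p) ℤ) :
    PadicInt.toZModPow k (L p x) = g p k x :=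
  RingHom.congr_fun (PadicInt.lift_spec (gcompat p) k) x

/-- The coordinates of the comparison map. -/
noncomputable def E (x : AdicCompletion (J p) (ℕ →₀ ℤ)) (n : ℕ) : ℤ_[p] :=
  L p (AdicCompletion.map (J p) (Finsupp.lapply n) x)

lemma Espec (k : ℕ) (x : AdicCompletion (J p) (ℕ →₀ ℤ)) (n : ℕ) (f : ℕ →₀ ℤ)
    (h : x.val k = Submodule.Quotient.mk f) :
    PadicInt.toZModPow k (E p x n) = ((f n : ℤ) : ZMod (p ^ k)) := by
  rw [E, Lspec]
  apply gspec
  rw [AdicCompletion.map_val_apply, h]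
  rfl


lemma mem_smul_top_iff (k : ℕ) (f : ℕ →₀ ℤ) :
    f ∈ (J p ^ k • ⊤ : Submodule ℤ (ℕ →₀ ℤ)) ↔ ∀ n, (p : ℤ) ^ k ∣ f n := by
  constructor
  · intro hf n
    refine Submodule.smul_induction_on hf ?_ ?_
    · intro r hr m _
      rw [Jpow, Ideal.mem_span_singleton] at hr
      rw [Finsupp.smul_apply, smul_eq_mul]
      exact dvd_mul_of_dvd_left (by exact_mod_cast hr) _
    · intro x y hx hy
      rw [Finsupp.add_apply]
      exact dvd_add hx hy
  · intro h
    have hf : f = ((p : ℤ) ^ k) • (f.mapRange (fun t => t / (p : ℤ) ^ k) (by simp)) := by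
      ext n
      rw [Finsupp.smul_apply, Finsupp.mapRange_apply, smul_eq_mul]
      exact (Int.mul_ediv_cancel' (h n)).symm
    rw [hf]
    exact Submodule.smul_mem_smul (Ideal.pow_mem_pow (Ideal.mem_span_singleton_self _) k)
      Submodule.mem_top

lemma toZModPow_eq_zero_iff_dvd (k : ℕ) (z : ℤ_[p]) :
    PadicInt.toZModPow k z = 0 ↔ (p : ℤ_[p]) ^ k ∣ z := by
  rw [← RingHom.mem_ker, PadicInt.ker_toZModPow, Ideal.mem_span_singleton]

lemma tendsto_iff (a : ℕ → ℤ_[p]) :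
    Tendsto a atTop (nhds 0) ↔ ∀ k : ℕ, ∀ᶠ n in atTop, PadicInt.toZModPow k (a n) = 0 := by
  have hp : (0 : ℝ) < p := by exact_mod_cast (Fact.out : p.Prime).pos
  have hmem : ∀ (k : ℕ) (z : ℤ_[p]),
      PadicInt.toZModPow k z = 0 ↔ ‖z‖ ≤ (p : ℝ) ^ (-(k : ℤ)) := by
    intro k z
    rw [← RingHom.mem_ker, PadicInt.ker_toZModPow, PadicInt.norm_le_pow_iff_mem_span_pow]
  rw [NormedAddCommGroup.tendsto_nhds_zero]
  constructor
  · intro H k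
    filter_upwards [H ((p : ℝ) ^ (-(k : ℤ))) (zpow_pos hp _)] with n hn
    rw [hmem]; exact hn.le
  · intro H ε hε
    obtain ⟨k, hk⟩ := PadicInt.exists_pow_neg_lt p hε
    filter_upwards [H k] with n hn
    rw [hmem] at hn
    exact lt_of_le_of_lt hn hk

lemma E_null (x : AdicCompletion (J p) (ℕ →₀ ℤ)) :
    Tendsto (fun n => E p x n) atTop (nhds 0) := by
  rw [tendsto_iff]
  intro k
  obtain ⟨f, hf⟩ := Submodule.Quotient.mk_surjective _ (x.val k)
  rw [← Nat.cofinite_eq_atTop]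
  filter_upwards [f.support.finite_toSet.eventually_cofinite_notMem] with n hn
  rw [Espec p k x n f hf.symm, Finsupp.notMem_support_iff.mp (by simpa using hn)]
  simp

lemma E_add (x y : AdicCompletion (J p) (ℕ →₀ ℤ)) (n : ℕ) :
    E p (x + y) n = E p x n + E p y n := by
  rw [← PadicInt.ext_of_toZModPow]
  intro k
  obtain ⟨f, hf⟩ := Submodule.Quotient.mk_surjective _ (x.val k)
  obtain ⟨g, hg⟩ := Submodule.Quotient.mk_surjective _ (y.val k)
  have hxy : (x + y).val k = Submodule.Quotient.mk (f + g) := by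
    rw [AdicCompletion.val_add_apply, ← hf, ← hg, ← Submodule.Quotient.mk_add]
  rw [Espec p k _ n _ hxy, map_add, Espec p k x n f hf.symm, Espec p k y n g hg.symm,
    Finsupp.add_apply]
  push_cast
  ring

lemma E_smul (c : ℤ) (x : AdicCompletion (J p) (ℕ →₀ ℤ)) (n : ℕ) :
    E p (c • x) n = (c : ℤ_[p]) * E p x n := by
  rw [← PadicInt.ext_of_toZModPow]
  intro k
  obtain ⟨f, hf⟩ := Submodule.Quotient.mk_surjective _ (x.val k)
  have hcx : (c • x).val k = Submodule.Quotient.mk (c • f) := by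
    rw [AdicCompletion.val_smul_apply, ← hf, ← Submodule.Quotient.mk_smul]
  rw [Espec p k _ n _ hcx, map_mul, Espec p k x n f hf.symm, Finsupp.smul_apply,
    smul_eq_mul, map_intCast]
  push_cast
  ring


/-- The comparison map as an additive monoid hom into null sequences. -/
noncomputable def Ehom : AdicCompletion (J p) (ℕ →₀ ℤ) →+ nullSequences p where
  toFun x := ⟨fun n => E p x n, E_null p x⟩
  map_zero' := by
    ext n
    show E p 0 n = 0
    have h0 : (0 : AdicCompletion (J p) (ℕ →₀ ℤ)).val 0 = Submodule.Quotient.mk 0 := by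
      rw [AdicCompletion.val_zero_apply, Submodule.Quotient.mk_zero]
    rw [← PadicInt.ext_of_toZModPow]
    intro k
    have h0 : (0 : AdicCompletion (J p) (ℕ →₀ ℤ)).val k = Submodule.Quotient.mk 0 := by
      rw [AdicCompletion.val_zero_apply, Submodule.Quotient.mk_zero]
    rw [Espec p k 0 n 0 h0]
    simp
  map_add' x y := by
    ext n
    exact E_add p x y n

lemma Ehom_inj : Function.Injective (Ehom p) := by
  rw [injective_iff_map_eq_zero]
  intro x hx
  apply AdicCompletion.ext
  intro k
  obtain ⟨f, hf⟩ := Submodule.Quotient.mk_surjective _ (x.val k)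
  have hE : ∀ n, E p x n = 0 := fun n => congrFun (congrArg Subtype.val hx) n
  rw [AdicCompletion.val_zero_apply, ← hf, Submodule.Quotient.mk_eq_zero]
  rw [mem_smul_top_iff]
  intro n
  have := Espec p k x n f hf.symm
  rw [hE n, map_zero] at this
  have hdvd : ((p ^ k : ℕ) : ℤ) ∣ f n := (ZMod.intCast_zmod_eq_zero_iff_dvd _ _).mp this.symm
  exact_mod_cast hdvd

lemma Ehom_surj : Function.Surjective (Ehom p) := by
  rintro ⟨a, ha⟩
  haveI : ∀ k : ℕ, NeZero (p ^ k) := fun k => ⟨pow_ne_zero k (Fact.out : p.Prime).ne_zero⟩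
  have hfin : ∀ k : ℕ, {n | PadicInt.toZModPow k (a n) ≠ 0}.Finite := by
    intro k
    have h := (tendsto_iff p a).mp ha k
    rw [← Nat.cofinite_eq_atTop] at h
    exact Filter.eventually_cofinite.mp h
  set F : ℕ → (ℕ →₀ ℤ) := fun k =>
    ⟨(hfin k).toFinset, fun n => ((PadicInt.toZModPow k (a n)).val : ℤ), by
      intro n
      rw [Set.Finite.mem_toFinset, Set.mem_setOf_eq]
      exact (not_congr (by rw [Int.natCast_eq_zero, ZMod.val_eq_zero])).symm⟩ with hF
  have hFcast : ∀ (k1 k2 : ℕ), k1 ≤ k2 → ∀ n,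
      ((F k2 n : ℤ) : ZMod (p ^ k1)) = PadicInt.toZModPow k1 (a n) := by
    intro k1 k2 h n
    show (((PadicInt.toZModPow k2 (a n)).val : ℤ) : ZMod (p ^ k1)) = _
    rw [Int.cast_natCast, ZMod.natCast_val, PadicInt.cast_toZModPow _ _ h]
  have hcompat : ∀ (k1 k2 : ℕ), k1 ≤ k2 →
      F k2 - F k1 ∈ (J p ^ k1 • ⊤ : Submodule ℤ (ℕ →₀ ℤ)) := by
    intro k1 k2 h
    rw [mem_smul_top_iff]
    intro n
    have : (((F k2 n - F k1 n : ℤ)) : ZMod (p ^ k1)) = 0 := by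
      push_cast
      rw [hFcast k1 k2 h n, hFcast k1 k1 le_rfl n, sub_self]
    have := (ZMod.intCast_zmod_eq_zero_iff_dvd _ _).mp this
    rw [Finsupp.sub_apply]
    exact_mod_cast this
  refine ⟨⟨fun k => Submodule.Quotient.mk (F k), ?_⟩, ?_⟩
  · intro k1 k2 h
    exact (Submodule.Quotient.eq _).mpr (hcompat k1 k2 h)
  · ext n
    show E p _ n = a n
    rw [← PadicInt.ext_of_toZModPow]
    intro k
    refine (Espec p k _ n (F k) ?_).trans ?_
    · rfl
    · exact hFcast k k le_rfl n

end Stmt13Aux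

/-- The `p`-adic completion of `⊕_{n∈ℕ} ℤ` is isomorphic to the group of null sequences in
`ℤ_p`, via an isomorphism induced by the coordinatewise inclusion `⊕_ℕ ℤ → ∏_ℕ ℤ_p`;
moreover the isomorphism is topological: it matches the `p`-adic filtration of the
completion with the filtration by sequences all of whose entries are divisible by `p^k`. -/
theorem stmt_13 (p : ℕ) [Fact p.Prime] :
    ∃ e : AdicCompletion (Ideal.span {(p : ℤ)}) (ℕ →₀ ℤ) ≃+ nullSequences p,
      (∀ (f : ℕ →₀ ℤ) (n : ℕ),
        (e (AdicCompletion.of (Ideal.span {(p : ℤ)}) (ℕ →₀ ℤ) f)).1 n = ((f n : ℤ) : ℤ_[p])) ∧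
      (∀ (k : ℕ) (x : AdicCompletion (Ideal.span {(p : ℤ)}) (ℕ →₀ ℤ)),
        x ∈ (Ideal.span {(p : ℤ)}) ^ k •
            (⊤ : Submodule ℤ (AdicCompletion (Ideal.span {(p : ℤ)}) (ℕ →₀ ℤ))) ↔
          ∀ n : ℕ, ((p : ℤ_[p])) ^ k ∣ (e x).1 n) := by
  classical
  refine ⟨AddEquiv.ofBijective (Stmt13Aux.Ehom p)
    ⟨Stmt13Aux.Ehom_inj p, Stmt13Aux.Ehom_surj p⟩, ?_, ?_⟩
  · intro f n
    show Stmt13Aux.E p (AdicCompletion.of _ _ f) n = _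
    rw [← PadicInt.ext_of_toZModPow]
    intro k
    have h : (AdicCompletion.of (Stmt13Aux.J p) (ℕ →₀ ℤ) f).val k = Submodule.Quotient.mk f :=
      AdicCompletion.of_apply _ _ f k
    rw [Stmt13Aux.Espec p k _ n f h, map_intCast]
  · intro k x
    constructor
    · intro hx n
      show (p : ℤ_[p]) ^ k ∣ Stmt13Aux.E p x n
      refine Submodule.smul_induction_on hx ?_ ?_
      · intro r hr m _
        rw [Stmt13Aux.Jpow, Ideal.mem_span_singleton] at hr
        obtain ⟨c, hc⟩ := hr
        rw [hc, Stmt13Aux.E_smul]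
        exact ⟨(c : ℤ_[p]) * Stmt13Aux.E p m n, by push_cast; ring⟩
      · intro u v hu hv
        rw [Stmt13Aux.E_add]
        exact dvd_add hu hv
    · intro h
      have hd : ∀ n, ∃ c, Stmt13Aux.E p x n = (p : ℤ_[p]) ^ k * c := fun n => by
        obtain ⟨c, hc⟩ := h n; exact ⟨c, hc⟩
      choose b hb using hd
      have hp : (0 : ℝ) < p := by exact_mod_cast (Fact.out : p.Prime).pos
      have hbn : Tendsto b atTop (nhds 0) := by
        have ha : Tendsto (fun n => Stmt13Aux.E p x n) atTop (nhds 0) := Stmt13Aux.E_null p x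
        rw [tendsto_zero_iff_norm_tendsto_zero] at ha ⊢
        have hbnorm : ∀ n, ‖b n‖ = (p : ℝ) ^ k * ‖Stmt13Aux.E p x n‖ := by
          intro n
          rw [hb n, norm_mul, PadicInt.norm_p_pow, ← mul_assoc,
            ← zpow_natCast (p : ℝ) k, ← zpow_add₀ hp.ne', add_neg_cancel, zpow_zero, one_mul]
        simp only [hbnorm]
        simpa using ha.const_mul ((p : ℝ) ^ k)
      obtain ⟨y, hy⟩ := Stmt13Aux.Ehom_surj p ⟨b, hbn⟩
      have hxy : x = ((p : ℤ) ^ k) • y := by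
        apply Stmt13Aux.Ehom_inj p
        ext n
        show Stmt13Aux.E p x n = Stmt13Aux.E p (((p : ℤ) ^ k) • y) n
        rw [Stmt13Aux.E_smul]
        have hyn : Stmt13Aux.E p y n = b n := congrFun (congrArg Subtype.val hy) n
        rw [hyn, hb n]
        push_cast
        ring
      rw [hxy]
      exact Submodule.smul_mem_smul (Ideal.pow_mem_pow (Ideal.mem_span_singleton_self _) k)
        Submodule.mem_top
end

section
/- Let D be a commutative ring and let p, s ∈ D be such that both (p, s) and (s, p) are regular sequences (i.e. p is a nonzerodivisor, s is a nonzerodivisor on D/pD, s is a nonzerodivisor, and p is a nonzerodivisor on D/sD). Then the commutative square of localizations D → D[1/p], D → D[1/s], D[1/p] → D[1/ps], D[1/s] → D[1/ps] is a pullback: the sequence 0 → D → D[1/p] ⊕ D[1/s] → D[1/ps] (where the last map is the difference of the two localization maps) is exact. -/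
private lemma aux_pow_mul_eq_zero {D : Type*} [CommRing D] {p : D}
    (hp : ∀ x : D, p * x = 0 → x = 0) :
    ∀ (k : ℕ) (x : D), p ^ k * x = 0 → x = 0 := by
  intro k
  induction k with
  | zero => intro x hx; simpa using hx
  | succ k ih =>
    intro x hx
    exact ih x (hp _ (by linear_combination hx))

private lemma aux_pow_dvd_of_dvd_mul {D : Type*} [CommRing D] {p s : D}
    (hp : ∀ x : D, p * x = 0 → x = 0)
    (hsp : ∀ x : D, p ∣ s * x → p ∣ x) :
    ∀ (n : ℕ) (x : D), p ^ n ∣ s * x → p ^ n ∣ x := by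
  intro n
  induction n with
  | zero => intro x _; simpa using one_dvd x
  | succ n ih =>
    intro x hx
    obtain ⟨t, ht⟩ := hx
    obtain ⟨x', rfl⟩ : p ∣ x := hsp x ⟨p ^ n * t, by linear_combination ht⟩
    have h2 : s * x' - p ^ n * t = 0 := hp _ (by linear_combination ht)
    obtain ⟨u, hu⟩ := ih x' ⟨t, by linear_combination h2⟩
    exact ⟨u, by rw [hu]; ring⟩

private lemma aux_pow_dvd_of_dvd_pow_mul {D : Type*} [CommRing D] {p s : D}
    (hp : ∀ x : D, p * x = 0 → x = 0)
    (hsp : ∀ x : D, p ∣ s * x → p ∣ x) :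
    ∀ (m n : ℕ) (x : D), p ^ n ∣ s ^ m * x → p ^ n ∣ x := by
  intro m
  induction m with
  | zero => intro n x hx; simpa using hx
  | succ m ih =>
    intro n x hx
    exact ih n x (aux_pow_dvd_of_dvd_mul hp hsp n _
      (by rw [show s * (s ^ m * x) = s ^ (m + 1) * x by ring]; exact hx))

/-- Let `D` be a commutative ring and `p, s ∈ D` such that both `(p, s)` and `(s, p)` are
regular sequences. Then the square of localizations `D → D[1/p], D → D[1/s] → D[1/ps]` is
a pullback: the sequence `0 → D → D[1/p] ⊕ D[1/s] → D[1/ps]` is exact. Here the maps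
`D[1/p] → D[1/ps]` and `D[1/s] → D[1/ps]` are the (unique) ring homomorphisms compatible
with the localization maps from `D`. -/
theorem stmt_15 (D : Type*) [CommRing D] (p s : D)
    (hp : ∀ x : D, p * x = 0 → x = 0)
    (hsp : ∀ x : D, s * x ∈ Ideal.span {p} → x ∈ Ideal.span {p})
    (hs : ∀ x : D, s * x = 0 → x = 0)
    (hps : ∀ x : D, p * x ∈ Ideal.span {s} → x ∈ Ideal.span {s}) :
    ∀ (f : Localization.Away p →+* Localization.Away (p * s))
      (g : Localization.Away s →+* Localization.Away (p * s)),
      f.comp (algebraMap D (Localization.Away p)) = algebraMap D (Localization.Away (p * s)) →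
      g.comp (algebraMap D (Localization.Away s)) = algebraMap D (Localization.Away (p * s)) →
      (∀ d : D, algebraMap D (Localization.Away p) d = 0 →
        algebraMap D (Localization.Away s) d = 0 → d = 0) ∧
      (∀ (a : Localization.Away p) (b : Localization.Away s), f a = g b →
        ∃! d : D, algebraMap D (Localization.Away p) d = a ∧
          algebraMap D (Localization.Away s) d = b) := by
  intro f g hf hg
  have hsp' : ∀ x : D, p ∣ s * x → p ∣ x := fun x hx =>
    Ideal.mem_span_singleton.mp (hsp x (Ideal.mem_span_singleton.mpr hx))
  have hinj : ∀ d : D, algebraMap D (Localization.Away p) d = 0 → d = 0 := by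
    intro d hd
    obtain ⟨⟨c, k, hk⟩, hc⟩ :=
      (IsLocalization.map_eq_zero_iff (Submonoid.powers p) (Localization.Away p) d).mp hd
    have hk' : p ^ k = c := hk
    have hc' : p ^ k * d = 0 := by rw [hk']; exact hc
    exact aux_pow_mul_eq_zero hp k d hc'
  constructor
  · intro d h1 _; exact hinj d h1
  · intro a b hab
    obtain ⟨⟨x, cn⟩, hx⟩ := IsLocalization.surj (Submonoid.powers p) a
    obtain ⟨n, hn0⟩ := cn.2
    have hn : p ^ n = (cn : D) := hn0
    obtain ⟨⟨y, cm⟩, hy⟩ := IsLocalization.surj (Submonoid.powers s) b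
    obtain ⟨m, hm0⟩ := cm.2
    have hm : s ^ m = (cm : D) := hm0
    simp only at hx hy
    rw [← hn] at hx
    rw [← hm] at hy
    have h1 : f (algebraMap D (Localization.Away p) (p ^ n))
        = algebraMap D (Localization.Away (p * s)) (p ^ n) := RingHom.congr_fun hf _
    have h2 : f (algebraMap D (Localization.Away p) x)
        = algebraMap D (Localization.Away (p * s)) x := RingHom.congr_fun hf _
    have h3 : g (algebraMap D (Localization.Away s) (s ^ m))
        = algebraMap D (Localization.Away (p * s)) (s ^ m) := RingHom.congr_fun hg _
    have h4 : g (algebraMap D (Localization.Away s) y)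
        = algebraMap D (Localization.Away (p * s)) y := RingHom.congr_fun hg _
    have hfa : f a * algebraMap D (Localization.Away (p * s)) (p ^ n)
        = algebraMap D (Localization.Away (p * s)) x := by
      rw [← h1, ← h2, ← map_mul, hx]
    have hgb : g b * algebraMap D (Localization.Away (p * s)) (s ^ m)
        = algebraMap D (Localization.Away (p * s)) y := by
      rw [← h3, ← h4, ← map_mul, hy]
    have key0 : algebraMap D (Localization.Away (p * s)) (x * s ^ m - y * p ^ n) = 0 := by
      rw [map_sub, map_mul, map_mul, ← hfa, ← hgb, hab]
      ring
    obtain ⟨⟨c, k, hk⟩, hc⟩ :=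
      (IsLocalization.map_eq_zero_iff (Submonoid.powers (p * s))
        (Localization.Away (p * s)) _).mp key0
    have hk' : (p * s) ^ k = c := hk
    have hc' : (p * s) ^ k * (x * s ^ m - y * p ^ n) = 0 := by rw [hk']; exact hc
    have hpsnz : ∀ z : D, (p * s) ^ k * z = 0 → z = 0 := by
      intro z hz
      have : p ^ k * (s ^ k * z) = 0 := by linear_combination hz
      exact aux_pow_mul_eq_zero hs k z (aux_pow_mul_eq_zero hp k _ this)
    have key : x * s ^ m = y * p ^ n := sub_eq_zero.mp (hpsnz _ hc')
    obtain ⟨d, hd⟩ : p ^ n ∣ x :=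
      aux_pow_dvd_of_dvd_pow_mul hp hsp' m n x ⟨y, by linear_combination key⟩
    have hyd : y = s ^ m * d := by
      have h0 : p ^ n * (s ^ m * d - y) = 0 := by linear_combination key - s ^ m * hd
      exact (sub_eq_zero.mp (aux_pow_mul_eq_zero hp n _ h0)).symm
    have hda : algebraMap D (Localization.Away p) d = a := by
      have hu : IsUnit (algebraMap D (Localization.Away p) (p ^ n)) := by
        rw [hn]; exact IsLocalization.map_units _ cn
      apply hu.mul_left_cancel
      rw [← map_mul, ← hd, ← hx]
      ring
    have hdb : algebraMap D (Localization.Away s) d = b := by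
      have hu : IsUnit (algebraMap D (Localization.Away s) (s ^ m)) := by
        rw [hm]; exact IsLocalization.map_units _ cm
      apply hu.mul_left_cancel
      rw [← map_mul, ← hyd, ← hy]
      ring
    refine ⟨d, ⟨hda, hdb⟩, ?_⟩
    intro d' ⟨hd1, _⟩
    have : algebraMap D (Localization.Away p) (d' - d) = 0 := by
      rw [map_sub, hd1, hda, sub_self]
    exact sub_eq_zero.mp (hinj _ this)
end

section
/- The power series ring ℤ_p[[T]] is flat as a module over the polynomial ring ℤ[T], via the natural inclusion ℤ[T] → ℤ_p[[T]]. -/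
open Polynomial

namespace Stmt16

variable (p : ℕ) [Fact p.Prime]

/-- The ideal `(p, X)` of `ℤ[X]`. -/
noncomputable def J : Ideal (Polynomial ℤ) := Ideal.span {C (p : ℤ), Polynomial.X}

/-- Transfer of `p`-power divisibility between `ℤ` and `ℤ_[p]`. -/
theorem int_pdvd_iff (k : ℕ) (a : ℤ) :
    ((p : ℤ_[p]) ^ k ∣ (a : ℤ_[p])) ↔ ((p : ℤ) ^ k ∣ a) := by
  rw [← Ideal.mem_span_singleton, ← PadicInt.norm_le_pow_iff_mem_span_pow,
    PadicInt.norm_int_le_pow_iff_dvd]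

/-- The divisibility predicate cutting out `(p,X)^n`. -/
def D (n : ℕ) (q : Polynomial ℤ) : Prop := ∀ i < n, (p : ℤ) ^ (n - i) ∣ q.coeff i

theorem D_add {n : ℕ} {q r : Polynomial ℤ} (hq : D p n q) (hr : D p n r) :
    D p n (q + r) := fun i hi => by
  rw [Polynomial.coeff_add]; exact dvd_add (hq i hi) (hr i hi)

theorem D_mul_poly {n : ℕ} (a : Polynomial ℤ) {q : Polynomial ℤ} (hq : D p n q) :
    D p n (a * q) := by
  intro i hi
  rw [Polynomial.coeff_mul]
  refine Finset.dvd_sum fun x hx => ?_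
  have hx2 : x.2 ≤ i := by
    rw [Finset.HasAntidiagonal.mem_antidiagonal] at hx; omega
  exact Dvd.dvd.mul_left ((pow_dvd_pow _ (by omega)).trans (hq x.2 (by omega))) _

theorem D_mul_C {n : ℕ} {q : Polynomial ℤ} (hq : D p n q) :
    D p (n + 1) (C (p : ℤ) * q) := by
  intro i hi
  rw [Polynomial.coeff_C_mul]
  rcases lt_or_ge i n with h | h
  · obtain ⟨c, hc⟩ := hq i h
    exact ⟨c, by rw [hc, show n + 1 - i = (n - i) + 1 by omega]; ring⟩
  · rw [show n + 1 - i = 1 by omega, pow_one]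
    exact Dvd.intro _ rfl

theorem D_mul_X {n : ℕ} {q : Polynomial ℤ} (hq : D p n q) :
    D p (n + 1) (Polynomial.X * q) := by
  intro i hi
  cases i with
  | zero => simp
  | succ j =>
    rw [Polynomial.coeff_X_mul, show n + 1 - (j + 1) = n - j by omega]
    exact hq j (by omega)

theorem mem_J_pow_iff {n : ℕ} {q : Polynomial ℤ} :
    q ∈ (J p) ^ n ↔ D p n q := by
  constructor
  · intro hq
    induction n generalizing q with
    | zero => intro i hi; omega
    | succ n ih =>
      rw [pow_succ, mul_comm] at hq
      refine Submodule.mul_induction_on hq ?_ fun x y hx hy => D_add p hx hy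
      intro r hr s hs
      have hs' := ih hs
      rw [J, Ideal.mem_span_pair] at hr
      obtain ⟨a, b, rfl⟩ := hr
      rw [add_mul, mul_assoc, mul_assoc]
      exact D_add p (D_mul_poly p a (D_mul_C p hs')) (D_mul_poly p b (D_mul_X p hs'))
  · intro hq
    have hCp : C (p : ℤ) ∈ J p := Ideal.subset_span (Set.mem_insert _ _)
    have hX : (Polynomial.X : Polynomial ℤ) ∈ J p :=
      Ideal.subset_span (Set.mem_insert_of_mem _ rfl)
    rw [q.as_sum_range' (q.natDegree + 1) (Nat.lt_succ_self _)]
    refine Ideal.sum_mem _ fun i _ => ?_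
    rcases lt_or_ge i n with h | h
    · obtain ⟨c, hc⟩ := hq i h
      rw [← C_mul_X_pow_eq_monomial, hc, map_mul, map_pow]
      have : (C (p : ℤ)) ^ (n - i) * C c * Polynomial.X ^ i
          = C c * ((C (p : ℤ)) ^ (n - i) * Polynomial.X ^ i) := by ring
      rw [this]
      refine Ideal.mul_mem_left _ _ ?_
      have := Ideal.mul_mem_mul (Ideal.pow_mem_pow hCp (n - i)) (Ideal.pow_mem_pow hX i)
      rwa [← pow_add, Nat.sub_add_cancel (le_of_lt h)] at this
    · rw [← C_mul_X_pow_eq_monomial, show i = (i - n) + n by omega, pow_add, ← mul_assoc]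
      exact Ideal.mul_mem_left _ _ (Ideal.pow_mem_pow hX n)

/-- Approximation relation: `q` is congruent to `φ` "mod `(p,X)^n`". -/
def A (n : ℕ) (q : Polynomial ℤ) (φ : PowerSeries ℤ_[p]) : Prop :=
  ∀ i < n, (p : ℤ_[p]) ^ (n - i) ∣ ((q.coeff i : ℤ_[p]) - PowerSeries.coeff (R := ℤ_[p]) i φ)

/-- The `n`-th polynomial approximation of a power series over `ℤ_[p]`. -/
noncomputable def P (n : ℕ) (φ : PowerSeries ℤ_[p]) : Polynomial ℤ :=
  ∑ i ∈ Finset.range n, Polynomial.monomial i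
    ((PadicInt.appr (PowerSeries.coeff (R := ℤ_[p]) i φ) (n - i) : ℤ))

theorem coeff_P {n i : ℕ} (hi : i < n) (φ : PowerSeries ℤ_[p]) :
    (P p n φ).coeff i = (PadicInt.appr (PowerSeries.coeff (R := ℤ_[p]) i φ) (n - i) : ℤ) := by
  rw [P, Polynomial.finset_sum_coeff]
  rw [Finset.sum_eq_single i]
  · simp
  · intro b _ hbi; rw [Polynomial.coeff_monomial, if_neg hbi]
  · intro h; exact absurd (Finset.mem_range.mpr hi) h

theorem A_P (n : ℕ) (φ : PowerSeries ℤ_[p]) : A p n (P p n φ) φ := by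
  intro i hi
  rw [coeff_P p hi]
  have h := PadicInt.appr_spec (n - i) (PowerSeries.coeff (R := ℤ_[p]) i φ)
  rw [Ideal.mem_span_singleton] at h
  have h2 : (p : ℤ_[p]) ^ (n - i) ∣
      -(PowerSeries.coeff (R := ℤ_[p]) i φ -
        (PadicInt.appr (PowerSeries.coeff (R := ℤ_[p]) i φ) (n - i) : ℤ_[p])) :=
    h.neg_right
  rw [neg_sub] at h2
  exact_mod_cast h2

theorem A_mono {m n : ℕ} (hmn : m ≤ n) {q : Polynomial ℤ} {φ : PowerSeries ℤ_[p]}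
    (h : A p n q φ) : A p m q φ := fun i hi =>
  (pow_dvd_pow _ (by omega)).trans (h i (by omega))

theorem diff_mem {n : ℕ} {q r : Polynomial ℤ} {φ : PowerSeries ℤ_[p]}
    (hq : A p n q φ) (hr : A p n r φ) : q - r ∈ (J p) ^ n := by
  rw [mem_J_pow_iff]
  intro i hi
  rw [← int_pdvd_iff]
  have h := (hq i hi).sub (hr i hi)
  convert h using 1
  rw [Polynomial.coeff_sub]
  push_cast
  ring

theorem A_add {n : ℕ} {q r : Polynomial ℤ} {φ ψ : PowerSeries ℤ_[p]}
    (hq : A p n q φ) (hr : A p n r ψ) : A p n (q + r) (φ + ψ) := by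
  intro i hi
  have h := (hq i hi).add (hr i hi)
  convert h using 1
  rw [Polynomial.coeff_add, map_add]
  push_cast
  ring

theorem A_smul {n : ℕ} (a : Polynomial ℤ) {q : Polynomial ℤ} {φ : PowerSeries ℤ_[p]}
    (hq : A p n q φ) :
    A p n (a * q) ((PowerSeries.map (Int.castRingHom ℤ_[p]) a) * φ) := by
  intro i hi
  rw [Polynomial.coeff_mul, PowerSeries.coeff_mul]
  push_cast
  rw [← Finset.sum_sub_distrib]
  refine Finset.dvd_sum fun x hx => ?_
  have hx2 : x.2 ≤ i := by
    rw [Finset.HasAntidiagonal.mem_antidiagonal] at hx; omega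
  have heq : ((a.coeff x.1 : ℤ_[p]) * (q.coeff x.2 : ℤ_[p]) -
      PowerSeries.coeff (R := ℤ_[p]) x.1 (PowerSeries.map (Int.castRingHom ℤ_[p]) ↑a) *
        PowerSeries.coeff (R := ℤ_[p]) x.2 φ)
      = (a.coeff x.1 : ℤ_[p]) * ((q.coeff x.2 : ℤ_[p]) - PowerSeries.coeff (R := ℤ_[p]) x.2 φ) := by
    rw [PowerSeries.coeff_map, Polynomial.coeff_coe, eq_intCast]
    ring
  rw [heq]
  exact Dvd.dvd.mul_left ((pow_dvd_pow _ (by omega)).trans (hq x.2 (by omega))) _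

theorem smul_top_eq {R : Type*} [CommRing R] (I : Ideal R) :
    (I • ⊤ : Submodule R R) = I := by simp

theorem mk_eq_mk {n : ℕ} {q r : Polynomial ℤ} {φ : PowerSeries ℤ_[p]}
    (hq : A p n q φ) (hr : A p n r φ) :
    (Submodule.Quotient.mk (p := ((J p) ^ n • ⊤ : Submodule (Polynomial ℤ) (Polynomial ℤ))) q)
      = Submodule.Quotient.mk r := by
  rw [Submodule.Quotient.eq, smul_top_eq]
  exact diff_mem p hq hr

theorem transitionMap_mk' {m n : ℕ} (hmn : m ≤ n) (x : Polynomial ℤ) :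
    AdicCompletion.transitionMap (J p) (Polynomial ℤ) hmn
      (Submodule.Quotient.mk (p := ((J p) ^ n • ⊤ : Submodule (Polynomial ℤ) (Polynomial ℤ))) x)
      = Submodule.Quotient.mk x := rfl

/-- The comparison map from `ℤ_p[[X]]` to the `(p,X)`-adic completion of `ℤ[X]`. -/
noncomputable def F : PowerSeries ℤ_[p] →ₗ[Polynomial ℤ] AdicCompletion (J p) (Polynomial ℤ) where
  toFun φ := ⟨fun n => Submodule.Quotient.mk (P p n φ), fun {m n} hmn => by
    rw [transitionMap_mk']
    exact mk_eq_mk p (A_mono p hmn (A_P p n φ)) (A_P p m φ)⟩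
  map_add' φ ψ := by
    apply Subtype.ext
    funext n
    show Submodule.Quotient.mk (P p n (φ + ψ))
      = Submodule.Quotient.mk (p := ((J p) ^ n • ⊤ : Submodule (Polynomial ℤ) (Polynomial ℤ))) (P p n φ) + Submodule.Quotient.mk (P p n ψ)
    rw [← Submodule.Quotient.mk_add]
    exact mk_eq_mk p (A_P p n (φ + ψ)) (A_add p (A_P p n φ) (A_P p n ψ))
  map_smul' q φ := by
    apply Subtype.ext
    funext n
    show Submodule.Quotient.mk (P p n (q • φ))
      = q • Submodule.Quotient.mk (p := ((J p) ^ n • ⊤ : Submodule (Polynomial ℤ) (Polynomial ℤ))) (P p n φ)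
    rw [← Submodule.Quotient.mk_smul, smul_eq_mul]
    have hsm : q • φ = PowerSeries.map (Int.castRingHom ℤ_[p]) ↑q * φ := by
      rw [Algebra.smul_def, PowerSeries.algebraMap_apply', algebraMap_int_eq]
    refine mk_eq_mk p (A_P p n (q • φ)) ?_
    rw [hsm]
    exact A_smul p q (A_P p n φ)

theorem F_injective : Function.Injective (F p) := by
  intro φ ψ h
  suffices hz : ∀ χ : PowerSeries ℤ_[p], F p χ = 0 → χ = 0 by
    have : φ - ψ = 0 := hz _ (by rw [map_sub, h, sub_self])
    exact sub_eq_zero.mp this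
  intro χ hχ
  have hmem : ∀ n, P p n χ ∈ (J p) ^ n := by
    intro n
    have : (F p χ).val n = 0 := by rw [hχ]; rfl
    have h2 : Submodule.Quotient.mk (p := ((J p) ^ n • ⊤ : Submodule (Polynomial ℤ)
        (Polynomial ℤ))) (P p n χ) = 0 := this
    rwa [Submodule.Quotient.mk_eq_zero, smul_top_eq] at h2
  ext i
  rw [map_zero]
  have hdvd : ∀ k : ℕ, (p : ℤ_[p]) ^ k ∣ PowerSeries.coeff (R := ℤ_[p]) i χ := by
    intro k
    rcases Nat.eq_zero_or_pos k with rfl | hk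
    · simp
    · set n := i + k with hn
      have hi : i < n := by omega
      have h1 : (p : ℤ_[p]) ^ (n - i) ∣ ((P p n χ).coeff i : ℤ_[p]) := by
        rw [int_pdvd_iff]
        exact (mem_J_pow_iff p).mp (hmem n) i hi
      have h2 := A_P p n χ i hi
      have := (h1.sub h2)
      rw [show ((P p n χ).coeff i : ℤ_[p]) - (((P p n χ).coeff i : ℤ_[p])
        - PowerSeries.coeff (R := ℤ_[p]) i χ) = PowerSeries.coeff (R := ℤ_[p]) i χ by ring] at this
      rwa [show n - i = k by omega] at this
  refine IsHausdorff.haus (inferInstance : IsHausdorff (IsLocalRing.maximalIdeal ℤ_[p]) ℤ_[p])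
    _ fun k => ?_
  rw [SModEq.zero, smul_top_eq _]
  rw [PadicInt.maximalIdeal_eq_span_p, Ideal.span_singleton_pow, Ideal.mem_span_singleton]
  exact hdvd k

theorem F_surjective : Function.Surjective (F p) := by
  intro x
  choose q hq using fun n => Submodule.Quotient.mk_surjective
    ((J p) ^ n • ⊤ : Submodule (Polynomial ℤ) (Polynomial ℤ)) (x.val n)
  have hcompat : ∀ {m n : ℕ}, m ≤ n → q n - q m ∈ (J p) ^ m := by
    intro m n hmn
    have hx := x.property hmn
    rw [← hq n, ← hq m, transitionMap_mk'] at hx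
    rw [Submodule.Quotient.eq, smul_top_eq] at hx
    exact hx
  have hlim : ∀ i : ℕ, ∃ L : ℤ_[p], ∀ k : ℕ,
      (p : ℤ_[p]) ^ k ∣ (((q (k + i)).coeff i : ℤ_[p]) - L) := by
    intro i
    have hc : ∀ {m n : ℕ}, m ≤ n →
        (((q (m + i)).coeff i : ℤ_[p])) ≡ (((q (n + i)).coeff i : ℤ_[p]))
          [SMOD ((IsLocalRing.maximalIdeal ℤ_[p]) ^ m • ⊤ : Submodule ℤ_[p] ℤ_[p])] := by
      intro m n hmn
      rw [SModEq.sub_mem, smul_top_eq _, PadicInt.maximalIdeal_eq_span_p,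
        Ideal.span_singleton_pow, Ideal.mem_span_singleton]
      rcases Nat.eq_zero_or_pos m with rfl | hm
      · simp
      have h1 : q (n + i) - q (m + i) ∈ (J p) ^ (m + i) := hcompat (by omega)
      have h2 := (mem_J_pow_iff p).mp h1 i (by omega)
      rw [show m + i - i = m by omega] at h2
      rw [← int_pdvd_iff] at h2
      have h3 : (p : ℤ_[p]) ^ m ∣ -(((q (n + i) - q (m + i)).coeff i : ℤ_[p])) := h2.neg_right
      convert h3 using 1
      rw [Polynomial.coeff_sub]
      push_cast
      ring
    obtain ⟨L, hL⟩ := IsPrecomplete.prec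
      (inferInstance : IsPrecomplete (IsLocalRing.maximalIdeal ℤ_[p]) ℤ_[p])
      (f := fun k => (((q (k + i)).coeff i : ℤ_[p]))) hc
    refine ⟨L, fun k => ?_⟩
    have := hL k
    rw [SModEq.sub_mem, smul_top_eq _, PadicInt.maximalIdeal_eq_span_p,
      Ideal.span_singleton_pow, Ideal.mem_span_singleton] at this
    exact this
  choose L hL using hlim
  refine ⟨PowerSeries.mk L, ?_⟩
  apply Subtype.ext
  funext n
  show Submodule.Quotient.mk (P p n (PowerSeries.mk L)) = x.val n
  rw [← hq n]
  refine mk_eq_mk p (A_P p n (PowerSeries.mk L)) ?_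
  intro i hi
  have := hL i (n - i)
  rw [show n - i + i = n by omega] at this
  simpa using this

/-- `ℤ_p[[X]]` is flat over `ℤ[X]` (with respect to the standard algebra structure). -/
theorem flat_powerSeries : Module.Flat (Polynomial ℤ) (PowerSeries ℤ_[p]) := by
  haveI : Module.Flat (Polynomial ℤ) (AdicCompletion (J p) (Polynomial ℤ)) :=
    AdicCompletion.flat_of_isNoetherian (J p)
  exact Module.Flat.of_linearEquiv
    (LinearEquiv.ofBijective (F p) ⟨F_injective p, F_surjective p⟩)

end Stmt16

/-- The power series ring `ℤ_p[[T]]` is flat as a module over the polynomial ring `ℤ[T]`,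
via the natural inclusion `ℤ[T] → ℤ_p[[T]]`. -/
theorem stmt_16 (p : ℕ) [Fact p.Prime] :
    @Module.Flat (Polynomial ℤ) (PowerSeries ℤ_[p]) _ _
      (Module.compHom (PowerSeries ℤ_[p])
        ((PowerSeries.map (Int.castRingHom ℤ_[p])).comp
          (Polynomial.coeToPowerSeries.ringHom (R := ℤ)))) := by
  exact Stmt16.flat_powerSeries p
end
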